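/- For n ≥ 2, the vector (A_{n,0}(x), ..., A_{n,n-1}(x))^T equals M·(A_{n-1,0}(x), ..., A_{n-1,n-2}(x))^T, where M is the n×(n-1) matrix with M_{i,j} = x if j < i and M_{i,j} = 1 if j ≥ i (indices 0-based). -/

import Mathlib

/-!
Removing the last letter `v` of a permutation `σ` of `[n]` and standardising the rest gives a
bijection between `{σ | σ (n-1) = v}` and the permutations `τ` of `[n-1]`, inverse to
`snocPerm v`. It keeps every descent of `τ` and creates a final one exactly when `v` lies below
the last letter of `τ` after lifting, i.e. `v ≤ τ (n-2)`. With `v = n-1-i` and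
`τ (n-2) = n-2-j` this is the condition `j < i`, so grouping the `τ` by their last letter gives
row `i` of the matrix.
-/

open Polynomial

noncomputable section

/-- Number of descents of a permutation of `Fin n` (viewed as the word `σ 0, σ 1, …, σ (n-1)`). -/
def descents {n : ℕ} (σ : Equiv.Perm (Fin n)) : ℕ :=
  (Finset.univ.filter fun i : Fin n =>
    ∃ h : (i : ℕ) + 1 < n, σ ⟨(i : ℕ) + 1, h⟩ < σ i).card

/-- The Eulerian polynomial `A_n(x) = ∑_{σ ∈ S_n} x^{des σ}`. -/
def eulerianPoly (n : ℕ) : Polynomial ℝ :=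
  ∑ σ : Equiv.Perm (Fin n), X ^ descents σ

/-- The refined Eulerian polynomial `A_{n,i}(x)`: the descent generating polynomial over
permutations of `[n]` whose last entry is `n - i` (0-based: `σ (n-1) = n - 1 - i`). -/
def refinedEulerianPoly (n i : ℕ) : Polynomial ℝ :=
  ∑ σ ∈ Finset.univ.filter (fun σ : Equiv.Perm (Fin n) =>
      ∃ h : 0 < n, (σ ⟨n - 1, Nat.sub_lt h Nat.one_pos⟩ : ℕ) = n - 1 - i),
    X ^ descents σ

open Finset

lemma descents_eq_sum {m : ℕ} (σ : Equiv.Perm (Fin (m + 1))) :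
    descents σ = ∑ i : Fin m, if σ i.succ < σ i.castSucc then 1 else 0 := by
  rw [descents, card_filter, Fin.sum_univ_castSucc]
  simp only [Fin.val_last, lt_self_iff_false, IsEmpty.exists_iff, if_false, add_zero]
  refine sum_congr rfl fun i _ => if_congr ?_ rfl rfl
  simp [Fin.succ, Fin.castSucc]

/-- The word `τ` with its values `≥ v` raised by one, followed by the letter `v`. -/
def snocPerm {k : ℕ} (v : Fin (k + 2)) (τ : Equiv.Perm (Fin (k + 1))) :
    Equiv.Perm (Fin (k + 2)) :=
  ((finSuccEquiv' (Fin.last (k + 1))).trans τ.optionCongr).trans (finSuccEquiv' v).symm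

section snocPerm

variable {k : ℕ} (v : Fin (k + 2)) (τ : Equiv.Perm (Fin (k + 1)))

@[simp]
lemma snocPerm_last : snocPerm v τ (Fin.last (k + 1)) = v := by
  simp [snocPerm, finSuccEquiv'_at]

@[simp]
lemma snocPerm_castSucc (j : Fin (k + 1)) : snocPerm v τ j.castSucc = v.succAbove (τ j) := by
  simp [snocPerm, finSuccEquiv'_last_apply_castSucc]

lemma snocPerm_injective : Function.Injective (snocPerm v) := fun τ₁ τ₂ h =>
  Equiv.ext fun j => v.succAbove_right_injective <| by
    rw [← snocPerm_castSucc, ← snocPerm_castSucc, h]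

lemma exists_snocPerm_eq {σ : Equiv.Perm (Fin (k + 2))} (hσ : σ (Fin.last (k + 1)) = v) :
    ∃ τ, snocPerm v τ = σ := by
  set ρ := (finSuccEquiv' (Fin.last (k + 1))).symm.trans (σ.trans (finSuccEquiv' v))
  have hρ : ρ none = none := by simp [ρ, finSuccEquiv'_symm_none, hσ, finSuccEquiv'_at]
  have hρ' : (Equiv.removeNone ρ).optionCongr = ρ := by
    ext1 (_ | x)
    · simp [hρ]
    · refine (Equiv.removeNone_some ρ (Option.ne_none_iff_exists'.mp ?_)).trans rfl
      exact fun h => Option.some_ne_none x (ρ.injective (h.trans hρ.symm))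
  refine ⟨Equiv.removeNone ρ, ?_⟩
  rw [snocPerm, hρ']
  ext1 x
  simp [ρ]

lemma descents_snocPerm :
    descents (snocPerm v τ) = descents τ + if v ≤ (τ (Fin.last k)).castSucc then 1 else 0 := by
  rw [descents_eq_sum, descents_eq_sum, Fin.sum_univ_castSucc]
  congr 1
  · refine sum_congr rfl fun j _ => ?_
    rw [Fin.succ_castSucc, snocPerm_castSucc, snocPerm_castSucc]
    simp only [Fin.succAbove_lt_succAbove_iff]
  · rw [Fin.succ_last, snocPerm_last, snocPerm_castSucc]
    simp only [Fin.lt_succAbove_iff_le_castSucc]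

end snocPerm

lemma sum_filter_last_eq_sum_snocPerm {k : ℕ} (v : Fin (k + 2)) :
    ∑ σ : Equiv.Perm (Fin (k + 2)) with σ (Fin.last (k + 1)) = v, (X : ℝ[X]) ^ descents σ =
      ∑ τ : Equiv.Perm (Fin (k + 1)),
        X ^ descents τ * if v ≤ (τ (Fin.last k)).castSucc then X else 1 := by
  symm
  refine sum_bij (fun τ _ => snocPerm v τ) (fun τ _ => by simp)
    (fun _ _ _ _ h => snocPerm_injective v h) (fun σ hσ => ?_) (fun τ _ => ?_)
  · obtain ⟨τ, rfl⟩ := exists_snocPerm_eq v (mem_filter.mp hσ).2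
    exact ⟨τ, mem_univ τ, rfl⟩
  · split_ifs <;> simp [descents_snocPerm, *, pow_succ]

lemma refinedEulerianPoly_succ_eq {m : ℕ} (i : Fin (m + 1)) :
    refinedEulerianPoly (m + 1) i =
      ∑ σ : Equiv.Perm (Fin (m + 1)) with σ (Fin.last m) = i.rev, X ^ descents σ := by
  refine sum_congr (filter_congr fun σ _ => ?_) fun _ _ => rfl
  simp [Fin.ext_iff, Fin.val_rev, Fin.last]

lemma sum_mul_refinedEulerianPoly {m : ℕ} (c : Fin (m + 1) → ℝ[X]) :
    ∑ j, c j * refinedEulerianPoly (m + 1) j =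
      ∑ τ : Equiv.Perm (Fin (m + 1)), c (τ (Fin.last m)).rev * X ^ descents τ := by
  simp_rw [refinedEulerianPoly_succ_eq, mul_sum, ← Fin.rev_eq_iff]
  rw [← sum_fiberwise univ (fun τ : Equiv.Perm (Fin (m + 1)) => (τ (Fin.last m)).rev)]
  exact sum_congr rfl fun j _ => sum_congr rfl fun τ hτ => by rw [(mem_filter.mp hτ).2]

theorem refinedEulerian_matrix_recurrence (n : ℕ) (hn : 2 ≤ n) :
    (Matrix.of fun (i : Fin n) (j : Fin (n - 1)) =>
        if (j : ℕ) < (i : ℕ) then (X : Polynomial ℝ) else 1).mulVec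
      (fun j : Fin (n - 1) => refinedEulerianPoly (n - 1) (j : ℕ)) =
    fun i : Fin n => refinedEulerianPoly n (i : ℕ) := by
  obtain ⟨k, rfl⟩ : ∃ k, n = k + 2 := ⟨n - 2, by omega⟩
  funext i
  change ∑ j : Fin (k + 1), (if (j : ℕ) < i then X else 1) * refinedEulerianPoly (k + 1) j = _
  rw [sum_mul_refinedEulerianPoly, refinedEulerianPoly_succ_eq, sum_filter_last_eq_sum_snocPerm]
  refine sum_congr rfl fun τ _ => ?_
  have hfinal : ((τ (Fin.last k)).rev : ℕ) < i ↔ i.rev ≤ (τ (Fin.last k)).castSucc := by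
    simp only [Fin.le_def, Fin.val_rev, Fin.val_castSucc]
    omega
  rw [if_congr hfinal rfl rfl, mul_comm]

end
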